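/- If null(A) ∩ {λ ∈ ℝ^C : λ ≥ 0} = {0}, then the dual objective d(λ) = -(1/4)‖√(H⁻¹)Aλ‖² − ((1/2)FᵀH⁻¹A + Bᵀ)λ is strictly concave along every ray of the cone {λ ≥ 0} through a nonzero point, and d attains a finite supremum on {λ ≥ 0}. -/
import Mathlib

open Matrix

theorem dual_strictly_concave_on_rays_and_bounded {m C : ℕ}
    (H : Matrix (Fin m) (Fin m) ℝ) (hsymm : H.IsSymm) (hpd : H.PosDef)
    (S : Matrix (Fin m) (Fin m) ℝ) (hS : S.PosDef) (hSsq : S * S = H⁻¹)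
    (F : Fin m → ℝ) (A : Matrix (Fin m) (Fin C) ℝ) (B : Fin C → ℝ)
    (d : (Fin C → ℝ) → ℝ)
    (hd : ∀ lam, d lam =
      -(1/4 : ℝ) * (S.mulVec (A.mulVec lam) ⬝ᵥ S.mulVec (A.mulVec lam))
      - ((1/2 : ℝ) • (Aᵀ.mulVec (H⁻¹.mulVec F)) + B) ⬝ᵥ lam)
    (hnull : ∀ lam : Fin C → ℝ, A.mulVec lam = 0 → 0 ≤ lam → lam = 0) :
    (∀ lam : Fin C → ℝ, lam ≠ 0 → 0 ≤ lam →
      StrictConcaveOn ℝ (Set.Ici (0 : ℝ)) (fun t : ℝ => d (t • lam))) ∧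
    ∃ M : ℝ, IsLUB {x : ℝ | ∃ lam : Fin C → ℝ, 0 ≤ lam ∧ x = d lam} M := by
  set c0 : Fin C → ℝ := (1/2 : ℝ) • (Aᵀ.mulVec (H⁻¹.mulVec F)) + B with hc0
  set Q : (Fin C → ℝ) → ℝ :=
    fun x => S.mulVec (A.mulVec x) ⬝ᵥ S.mulVec (A.mulVec x) with hQ
  -- positivity of Q on the nonzero cone points
  have hSinj : Function.Injective (S.mulVec) :=
    Matrix.mulVec_injective_iff_isUnit.mpr hS.isUnit
  have hQpos : ∀ x : Fin C → ℝ, x ≠ 0 → 0 ≤ x → 0 < Q x := by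
    intro x hx hge
    have hAx : A.mulVec x ≠ 0 := fun h => hx (hnull x h hge)
    have hv : S.mulVec (A.mulVec x) ≠ 0 := by
      intro h
      apply hAx
      apply hSinj
      simpa [Matrix.mulVec_zero] using h
    have h := Matrix.dotProduct_star_self_pos_iff (v := S.mulVec (A.mulVec x))
    rw [star_trivial] at h
    exact h.mpr hv
  have hQhom : ∀ (t : ℝ) (x : Fin C → ℝ), Q (t • x) = t ^ 2 * Q x := by
    intro t x
    simp only [hQ, Matrix.mulVec_smul, smul_dotProduct, dotProduct_smul,
      smul_eq_mul]
    ring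
  have hform : ∀ (lam : Fin C → ℝ) (t : ℝ),
      d (t • lam) = -(1/4 : ℝ) * (t ^ 2 * Q lam) - t * (c0 ⬝ᵥ lam) := by
    intro lam t
    rw [hd]
    simp only [Matrix.mulVec_smul, smul_dotProduct, dotProduct_smul,
      smul_eq_mul, hQ, hc0]
    ring
  constructor
  · intro lam hne hge
    have hq : 0 < Q lam := hQpos lam hne hge
    refine ⟨convex_Ici 0, ?_⟩
    intro x _hx y _hy hxy a b ha hb hab
    have h2 : 0 < (x - y) ^ 2 :=
      lt_of_le_of_ne (sq_nonneg _) (Ne.symm (pow_ne_zero 2 (sub_ne_zero.mpr hxy)))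
    have hb' : b = 1 - a := by linarith
    subst hb'
    simp only [smul_eq_mul, hform]
    nlinarith [mul_pos (mul_pos ha hb) hq, mul_pos (mul_pos (mul_pos ha hb) hq) h2]
  · have hne : {x : ℝ | ∃ lam : Fin C → ℝ, 0 ≤ lam ∧ x = d lam}.Nonempty :=
      ⟨d 0, 0, le_refl 0, rfl⟩
    cases isEmpty_or_nonempty (Fin C) with
    | inl hE =>
      refine ⟨d 0, ?_⟩
      have hset : {x : ℝ | ∃ lam : Fin C → ℝ, 0 ≤ lam ∧ x = d lam} = {d 0} := by
        ext x
        constructor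
        · rintro ⟨lam, -, rfl⟩
          simp [Subsingleton.elim lam 0]
        · rintro rfl
          exact ⟨0, le_refl 0, rfl⟩
      rw [hset]
      exact isLUB_singleton
    | inr hNe =>
      -- compactness argument: Q ≥ c ‖·‖² on the cone
      set T : Set (Fin C → ℝ) := {x | 0 ≤ x} ∩ Metric.sphere 0 1 with hT
      have hTcl : IsClosed T := by
        apply IsClosed.inter
        · have : {x : Fin C → ℝ | 0 ≤ x} = Set.Ici 0 := rfl
          rw [this]; exact isClosed_Ici
        · exact Metric.isClosed_sphere
      have hTc : IsCompact T :=
        (isCompact_sphere (0 : Fin C → ℝ) 1).of_isClosed_subset hTcl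
          Set.inter_subset_right
      have hTne : T.Nonempty := by
        refine ⟨fun _ => (1 : ℝ), ?_, ?_⟩
        · intro i; norm_num
        · simp [Metric.mem_sphere, dist_zero_right]
      have hg : Continuous fun x : Fin C → ℝ => S.mulVec (A.mulVec x) := by
        have heq : (fun x : Fin C → ℝ => S.mulVec (A.mulVec x))
            = (S * A).mulVecLin := by
          ext x i
          rw [Matrix.mulVecLin_apply, ← Matrix.mulVec_mulVec]
        rw [heq]
        exact LinearMap.continuous_of_finiteDimensional _
      have hQcont : Continuous Q := by
        have : Q = fun x => ∑ i, (S.mulVec (A.mulVec x)) i * (S.mulVec (A.mulVec x)) i := rfl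
        rw [this]
        exact continuous_finset_sum _ fun i _ =>
          ((continuous_apply i).comp hg).mul ((continuous_apply i).comp hg)
      obtain ⟨x0, hx0T, hx0min⟩ := hTc.exists_isMinOn hTne hQcont.continuousOn
      have hx0ne : x0 ≠ 0 := by
        intro h
        have := hx0T.2
        rw [h] at this
        simp [Metric.mem_sphere] at this
      have hc : 0 < Q x0 := hQpos x0 hx0ne hx0T.1
      have hlow : ∀ lam : Fin C → ℝ, 0 ≤ lam → Q x0 * ‖lam‖ ^ 2 ≤ Q lam := by
        intro lam hge
        rcases eq_or_ne lam 0 with rfl | hne0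
        · simp [hQ, Matrix.mulVec_zero]
        · have ht : (0 : ℝ) < ‖lam‖ := norm_pos_iff.mpr hne0
          set u : Fin C → ℝ := ‖lam‖⁻¹ • lam with hu
          have huT : u ∈ T := by
            constructor
            · intro i
              simp only [hu, Pi.smul_apply, smul_eq_mul]
              exact mul_nonneg (inv_nonneg.mpr ht.le) (hge i)
            · simp [hu, Metric.mem_sphere, dist_zero_right, norm_smul,
                abs_of_pos (inv_pos.mpr ht), inv_mul_cancel₀ ht.ne']
          have hlam : lam = ‖lam‖ • u := by
            rw [hu, smul_smul, mul_inv_cancel₀ ht.ne', one_smul]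
          have hQu : Q x0 ≤ Q u := hx0min huT
          have hQlam : Q lam = ‖lam‖ ^ 2 * Q u := by
            have : Q lam = Q (‖lam‖ • u) := congrArg Q hlam
            rw [this, hQhom]
          rw [hQlam]
          nlinarith [sq_nonneg ‖lam‖]
      set K : ℝ := ∑ i, |c0 i| with hK
      have hKn : 0 ≤ K := Finset.sum_nonneg fun i _ => abs_nonneg _
      have hlin : ∀ lam : Fin C → ℝ, -(c0 ⬝ᵥ lam) ≤ K * ‖lam‖ := by
        intro lam
        have : -(c0 ⬝ᵥ lam) = ∑ i, -(c0 i * lam i) := by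
          simp [dotProduct]
        rw [this, hK, Finset.sum_mul]
        apply Finset.sum_le_sum
        intro i _
        have h1 : -(c0 i * lam i) ≤ |c0 i| * |lam i| := by
          calc -(c0 i * lam i) ≤ |c0 i * lam i| := neg_le_abs _
          _ = |c0 i| * |lam i| := abs_mul _ _
        have h2 : |lam i| ≤ ‖lam‖ := by
          have := norm_le_pi_norm lam i
          simpa [Real.norm_eq_abs] using this
        calc -(c0 i * lam i) ≤ |c0 i| * |lam i| := h1
        _ ≤ |c0 i| * ‖lam‖ := by
          exact mul_le_mul_of_nonneg_left h2 (abs_nonneg _)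
      have hbdd : BddAbove {x : ℝ | ∃ lam : Fin C → ℝ, 0 ≤ lam ∧ x = d lam} := by
        refine ⟨K ^ 2 / Q x0, ?_⟩
        rintro x ⟨lam, hge, rfl⟩
        rw [hd]
        have h1 := hlow lam hge
        have h2 := hlin lam
        have h3 : (0 : ℝ) ≤ ‖lam‖ := norm_nonneg _
        have key : -(1/4 : ℝ) * Q lam - c0 ⬝ᵥ lam ≤ K ^ 2 / Q x0 := by
          rw [le_div_iff₀ hc]
          nlinarith [sq_nonneg (Q x0 * ‖lam‖ - 2 * K),
            mul_le_mul_of_nonneg_left h1 hc.le, mul_le_mul_of_nonneg_left h2 hc.le]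
        calc -(1/4 : ℝ) * (S.mulVec (A.mulVec lam) ⬝ᵥ S.mulVec (A.mulVec lam))
              - c0 ⬝ᵥ lam = -(1/4 : ℝ) * Q lam - c0 ⬝ᵥ lam := rfl
        _ ≤ K ^ 2 / Q x0 := key
      exact ⟨_, isLUB_csSup hne hbdd⟩
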